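/- arXiv:2208.03233 — 2 statements merged into one kernel-verified Lean document; each statement's English description precedes it below -/
import Mathlib

section
/- Let {R_M}_{M∈𝕄} be a family of (random) confidence regions for a family of parameters {θ_M}_{M∈𝕄} indexed by a finite set 𝕄, and let M̂ be a random variable taking values in 𝕄, all on one probability space. Then P(θ_{M̂} ∉ R_{M̂}) ≤ α holds for every distribution of M̂ (i.e., for every 𝕄-valued random variable M̂ on the space) if and only if P(∩_{M∈𝕄} {θ_M ∈ R_M}) ≥ 1 − α. -/
open MeasureTheory

open Classical in
/-- Pick the first model in the list whose confidence region fails, else arbitrary. -/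
noncomputable def posiPick {Ω 𝕄 P : Type*} [Nonempty 𝕄]
    (θ : 𝕄 → Ω → P) (R : 𝕄 → Ω → Set P) : List 𝕄 → Ω → 𝕄
  | [], _ => Classical.arbitrary 𝕄
  | M :: t, ω => if θ M ω ∉ R M ω then M else posiPick θ R t ω

open Classical in
theorem posiPick_measurable {Ω 𝕄 P : Type*} [Nonempty 𝕄] [MeasurableSpace Ω]
    [MeasurableSpace 𝕄]
    (θ : 𝕄 → Ω → P) (R : 𝕄 → Ω → Set P)
    (hmeas : ∀ M : 𝕄, MeasurableSet {ω | θ M ω ∈ R M ω}) :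
    ∀ l : List 𝕄, Measurable (posiPick θ R l)
  | [] => measurable_const
  | M :: t => by
      have : Measurable fun ω => if θ M ω ∉ R M ω then M else posiPick θ R t ω :=
        Measurable.ite (hmeas M).compl measurable_const
          (posiPick_measurable θ R hmeas t)
      simpa [posiPick] using this

theorem posiPick_spec {Ω 𝕄 P : Type*} [Nonempty 𝕄]
    (θ : 𝕄 → Ω → P) (R : 𝕄 → Ω → Set P) :
    ∀ (l : List 𝕄) (ω : Ω), (∃ M ∈ l, θ M ω ∉ R M ω) →
      θ (posiPick θ R l ω) ω ∉ R (posiPick θ R l ω) ω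
  | [], ω, h => by simp at h
  | M :: t, ω, h => by
      classical
      by_cases hM : θ M ω ∉ R M ω
      · simpa [posiPick, hM] using hM
      · have h' : ∃ M ∈ t, θ M ω ∉ R M ω := by
          rcases h with ⟨N, hN, hNv⟩
          rcases List.mem_cons.1 hN with rfl | hNt
          · exact absurd hNv hM
          · exact ⟨N, hNt, hNv⟩
        simpa [posiPick, hM] using posiPick_spec θ R t ω h'

/-- Equivalence of valid post-selection inference and simultaneous inference
(Kuchibhotla et al., Thm 3.1): for a family of confidence regions `R M` for
parameters `θ M` indexed by a finite set `𝕄`, the guarantee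
`P(θ_{M̂} ∉ R_{M̂}) ≤ α` holds for every `𝕄`-valued random selection `M̂`
iff `P(∩_{M} {θ M ∈ R M}) ≥ 1 − α`. -/
theorem posi_iff_simultaneous
    {Ω : Type*} [MeasurableSpace Ω] (μ : Measure Ω) [IsProbabilityMeasure μ]
    {𝕄 : Type*} [Fintype 𝕄] [Nonempty 𝕄]
    [MeasurableSpace 𝕄] [MeasurableSingletonClass 𝕄]
    {P : Type*} (θ : 𝕄 → Ω → P) (R : 𝕄 → Ω → Set P) (α : ℝ)
    (hmeas : ∀ M : 𝕄, MeasurableSet {ω | θ M ω ∈ R M ω}) :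
    (∀ Mhat : Ω → 𝕄, Measurable Mhat →
        (μ {ω | θ (Mhat ω) ω ∉ R (Mhat ω) ω}).toReal ≤ α) ↔
      1 - α ≤ (μ {ω | ∀ M : 𝕄, θ M ω ∈ R M ω}).toReal := by
  set S : Set Ω := {ω | ∀ M : 𝕄, θ M ω ∈ R M ω} with hS
  have hSmeas : MeasurableSet S := by
    have : S = ⋂ M : 𝕄, {ω | θ M ω ∈ R M ω} := by
      ext ω; simp [hS]
    rw [this]
    exact MeasurableSet.iInter fun M => hmeas M
  have hcompl : (μ Sᶜ).toReal = 1 - (μ S).toReal := by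
    rw [measure_compl hSmeas (measure_ne_top μ S), measure_univ,
      ENNReal.toReal_sub_of_le prob_le_one ENNReal.one_ne_top, ENNReal.toReal_one]
  constructor
  · intro h
    set Mhat := posiPick θ R (Finset.univ.toList (α := 𝕄)) with hMhat
    have hmble : Measurable Mhat := posiPick_measurable θ R hmeas _
    have hset : {ω | θ (Mhat ω) ω ∉ R (Mhat ω) ω} = Sᶜ := by
      ext ω
      constructor
      · intro hω hωS
        exact hω (hωS (Mhat ω))
      · intro hω
        have : ∃ M, θ M ω ∉ R M ω := by
          by_contra hc
          push_neg at hc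
          exact hω hc
        rcases this with ⟨M, hM⟩
        exact posiPick_spec θ R _ ω ⟨M, by simp, hM⟩
    have := h Mhat hmble
    rw [hset, hcompl] at this
    linarith
  · intro h Mhat _
    have hsub : {ω | θ (Mhat ω) ω ∉ R (Mhat ω) ω} ⊆ Sᶜ := by
      intro ω hω hωS
      exact hω (hωS (Mhat ω))
    have := ENNReal.toReal_mono (measure_ne_top μ _) (measure_mono hsub)
    rw [hcompl] at this
    linarith
end

section
/- Deterministic estimation bound for post-selection least squares: let Ĥ and H be d×d symmetric matrices with H positive definite, λ_min(H) ≥ Λ, ‖Ĥ − H‖_∞ ≤ D^H, and Λ − d·D^H > 0. Let Ĝ, G ∈ ℝᵈ with ‖Ĝ − G‖_∞ ≤ D^G, and define θ̂ = Ĥ⁻¹Ĝ and θ = H⁻¹G. Then ‖θ̂ − θ‖₂ ≤ √d·(D^G + D^H‖θ‖₁)/(Λ − d·D^H), and hence ‖θ̂ − θ‖₁ ≤ d·(D^G + D^H‖θ‖₁)/(Λ − d·D^H). -/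
/-!
Write `e = θ̂ - θ`. Subtracting `Hθ = G` from `Ĥθ̂ = Ĝ` gives `Ĥ e = (Ĝ - G) - (Ĥ - H) θ`, whose
coordinates are bounded by `D^G + D^H ‖θ‖₁`. An entrywise perturbation of size `D^H` moves the
quadratic form by at most `d D^H ‖x‖₂²`, so `Ĥ` is coercive with constant `Λ - d D^H` (in particular
invertible), and by Cauchy–Schwarz `(Λ - d D^H) ‖e‖₂ ≤ ‖Ĥ e‖₂ ≤ √d ‖Ĥ e‖_∞`. Finally
`‖e‖₁ ≤ √d ‖e‖₂`.
-/

open Matrix Finset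

theorem Matrix.mulVec_mulVec_nonsing_inv_of_isUnit {R n : Type*} [Fintype n] [DecidableEq n]
    [CommRing R] {A : Matrix n n R} (hA : IsUnit A) (b : n → R) : A *ᵥ (A⁻¹ *ᵥ b) = b := by
  rw [mulVec_mulVec, mul_nonsing_inv _ ((isUnit_iff_isUnit_det A).mp hA), one_mulVec]

theorem Matrix.mulVec_sub_of_mulVec_eq {R n : Type*} [Fintype n] [CommRing R]
    {A A' : Matrix n n R} {x x' b b' : n → R} (hx : A *ᵥ x = b) (hx' : A' *ᵥ x' = b') :
    A' *ᵥ (x' - x) = (b' - b) - (A' - A) *ᵥ x := by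
  rw [mulVec_sub, sub_mulVec, hx, hx']
  abel

section

variable {n : Type*} [Fintype n]

theorem Matrix.dotProduct_self_nonneg (x : n → ℝ) : 0 ≤ x ⬝ᵥ x :=
  Fintype.sum_nonneg fun i => mul_self_nonneg (x i)

theorem Matrix.dotProduct_le_sqrt_mul_sqrt (x y : n → ℝ) :
    x ⬝ᵥ y ≤ √(x ⬝ᵥ x) * √(y ⬝ᵥ y) := by
  simpa only [dotProduct, sq] using Real.sum_mul_le_sqrt_mul_sqrt univ x y

theorem Matrix.sq_sum_abs_le_card_mul_dotProduct_self (x : n → ℝ) :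
    (∑ i, |x i|) ^ 2 ≤ Fintype.card n * (x ⬝ᵥ x) := by
  simpa [dotProduct, ← sq, sq_abs] using
    sq_sum_le_card_mul_sum_sq (s := univ) (f := fun i => |x i|)

theorem Matrix.sum_abs_le_sqrt_card_mul_sqrt_dotProduct_self (x : n → ℝ) :
    ∑ i, |x i| ≤ √(Fintype.card n) * √(x ⬝ᵥ x) := by
  rw [← Real.sqrt_mul (Nat.cast_nonneg _)]
  exact Real.le_sqrt_of_sq_le (sq_sum_abs_le_card_mul_dotProduct_self x)

theorem Matrix.sqrt_dotProduct_self_le_of_abs_le {v : n → ℝ} {M : ℝ} (hv : ∀ i, |v i| ≤ M) :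
    √(v ⬝ᵥ v) ≤ √(Fintype.card n) * M := by
  cases isEmpty_or_nonempty n
  · simp [dotProduct]
  obtain ⟨i⟩ := ‹Nonempty n›
  have hM : 0 ≤ M := (abs_nonneg _).trans (hv i)
  have hvv : v ⬝ᵥ v ≤ Fintype.card n * M ^ 2 :=
    calc v ⬝ᵥ v = ∑ i, |v i| ^ 2 := by simp_rw [sq_abs, sq]; rfl
      _ ≤ ∑ _i : n, M ^ 2 := sum_le_sum fun i _ => pow_le_pow_left₀ (abs_nonneg _) (hv i) 2
      _ = Fintype.card n * M ^ 2 := by simp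
  calc √(v ⬝ᵥ v) ≤ √(Fintype.card n * M ^ 2) := Real.sqrt_le_sqrt hvv
    _ = √(Fintype.card n) * M := by rw [Real.sqrt_mul (Nat.cast_nonneg _), Real.sqrt_sq hM]

theorem Matrix.abs_mulVec_apply_le {A : Matrix n n ℝ} {δ : ℝ} (hA : ∀ i j, |A i j| ≤ δ)
    (x : n → ℝ) (i : n) : |(A *ᵥ x) i| ≤ δ * ∑ j, |x j| := by
  simp only [mulVec, dotProduct, mul_sum]
  refine (abs_sum_le_sum_abs _ _).trans (sum_le_sum fun j _ => ?_)
  rw [abs_mul]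
  exact mul_le_mul_of_nonneg_right (hA i j) (abs_nonneg _)

theorem Matrix.abs_dotProduct_mulVec_le {A : Matrix n n ℝ} {δ : ℝ} (hA : ∀ i j, |A i j| ≤ δ)
    (x : n → ℝ) : |x ⬝ᵥ A *ᵥ x| ≤ Fintype.card n * δ * (x ⬝ᵥ x) := by
  cases isEmpty_or_nonempty n
  · simp [dotProduct]
  obtain ⟨i⟩ := ‹Nonempty n›
  have hδ : 0 ≤ δ := (abs_nonneg _).trans (hA i i)
  calc |x ⬝ᵥ A *ᵥ x| ≤ ∑ i, |x i| * (δ * ∑ j, |x j|) :=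
        (abs_sum_le_sum_abs _ _).trans <| sum_le_sum fun i _ => by
          rw [abs_mul]
          exact mul_le_mul_of_nonneg_left (abs_mulVec_apply_le hA x i) (abs_nonneg _)
    _ = δ * (∑ i, |x i|) ^ 2 := by rw [← sum_mul]; ring
    _ ≤ δ * (Fintype.card n * (x ⬝ᵥ x)) :=
        mul_le_mul_of_nonneg_left (sq_sum_abs_le_card_mul_dotProduct_self x) hδ
    _ = Fintype.card n * δ * (x ⬝ᵥ x) := by ring

/-- `λ_min(A) ≥ c`, phrased through the quadratic form so that `A` need not be symmetric. -/
def Matrix.IsCoercive (A : Matrix n n ℝ) (c : ℝ) : Prop :=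
  ∀ x, c * (x ⬝ᵥ x) ≤ x ⬝ᵥ A *ᵥ x

theorem Matrix.IsCoercive.of_abs_sub_le {A B : Matrix n n ℝ} {c δ : ℝ} (hA : A.IsCoercive c)
    (hBA : ∀ i j, |B i j - A i j| ≤ δ) : B.IsCoercive (c - Fintype.card n * δ) := by
  intro x
  have hsplit : x ⬝ᵥ B *ᵥ x = x ⬝ᵥ A *ᵥ x + x ⬝ᵥ (B - A) *ᵥ x := by
    rw [sub_mulVec, dotProduct_sub]
    ring
  have hpert := abs_dotProduct_mulVec_le (A := B - A) hBA x
  linarith [hA x, neg_abs_le (x ⬝ᵥ (B - A) *ᵥ x)]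

theorem Matrix.IsCoercive.isUnit [DecidableEq n] {A : Matrix n n ℝ} {c : ℝ}
    (hA : A.IsCoercive c) (hc : 0 < c) : IsUnit A := by
  refine mulVec_injective_iff_isUnit.mp fun x y hxy => ?_
  have h := hA (x - y)
  rw [mulVec_sub, hxy, sub_self, dotProduct_zero] at h
  have hself : (x - y) ⬝ᵥ (x - y) = 0 :=
    le_antisymm (nonpos_of_mul_nonpos_right h hc) (dotProduct_self_nonneg (x - y))
  exact sub_eq_zero.mp (dotProduct_self_eq_zero.mp hself)

theorem Matrix.IsCoercive.mul_sqrt_dotProduct_self_le {A : Matrix n n ℝ} {c : ℝ}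
    (hA : A.IsCoercive c) (x : n → ℝ) :
    c * √(x ⬝ᵥ x) ≤ √(A *ᵥ x ⬝ᵥ A *ᵥ x) := by
  rcases (Real.sqrt_nonneg (x ⬝ᵥ x)).eq_or_lt with h0 | hpos
  · rw [← h0, mul_zero]
    exact Real.sqrt_nonneg _
  refine le_of_mul_le_mul_right ?_ hpos
  calc c * √(x ⬝ᵥ x) * √(x ⬝ᵥ x) = c * (x ⬝ᵥ x) := by
        rw [mul_assoc, Real.mul_self_sqrt (dotProduct_self_nonneg x)]
    _ ≤ x ⬝ᵥ A *ᵥ x := hA x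
    _ ≤ √(x ⬝ᵥ x) * √(A *ᵥ x ⬝ᵥ A *ᵥ x) := dotProduct_le_sqrt_mul_sqrt x _
    _ = √(A *ᵥ x ⬝ᵥ A *ᵥ x) * √(x ⬝ᵥ x) := mul_comm _ _

theorem Matrix.IsCoercive.sqrt_dotProduct_self_le {A : Matrix n n ℝ} {c M : ℝ}
    (hA : A.IsCoercive c) (hc : 0 < c) {x : n → ℝ} (hAx : ∀ i, |(A *ᵥ x) i| ≤ M) :
    √(x ⬝ᵥ x) ≤ √(Fintype.card n) * M / c := by
  rw [le_div_iff₀ hc, mul_comm]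
  exact (hA.mul_sqrt_dotProduct_self_le x).trans (sqrt_dotProduct_self_le_of_abs_le hAx)

end

theorem post_selection_ls_deterministic_bound_general {d : ℕ}
    (H Hhat : Matrix (Fin d) (Fin d) ℝ) (G Ghat : Fin d → ℝ)
    (Λ DH DG : ℝ) (hΛpos : 0 < Λ)
    (hmin : ∀ x : Fin d → ℝ, Λ * (x ⬝ᵥ x) ≤ x ⬝ᵥ H.mulVec x)
    (hDH : ∀ i j, |Hhat i j - H i j| ≤ DH)
    (hgap : 0 < Λ - d * DH)
    (hDG : ∀ i, |Ghat i - G i| ≤ DG)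
    (θhat θ : Fin d → ℝ)
    (hθhat : θhat = Hhat⁻¹.mulVec Ghat) (hθ : θ = H⁻¹.mulVec G) :
    Real.sqrt (∑ i, (θhat i - θ i) ^ 2) ≤
        Real.sqrt d * (DG + DH * ∑ i, |θ i|) / (Λ - d * DH) ∧
      (∑ i, |θhat i - θ i|) ≤ d * (DG + DH * ∑ i, |θ i|) / (Λ - d * DH) := by
  set M := DG + DH * ∑ i, |θ i|
  have hHhat : Hhat.IsCoercive (Λ - d * DH) := by
    simpa only [Fintype.card_fin] using IsCoercive.of_abs_sub_le hmin hDH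
  have hHθ : H *ᵥ θ = G :=
    hθ ▸ mulVec_mulVec_nonsing_inv_of_isUnit (IsCoercive.isUnit hmin hΛpos) G
  have hHθhat : Hhat *ᵥ θhat = Ghat :=
    hθhat ▸ mulVec_mulVec_nonsing_inv_of_isUnit (hHhat.isUnit hgap) Ghat
  have hres : ∀ i, |((Ghat - G) - (Hhat - H) *ᵥ θ) i| ≤ M := fun i =>
    (abs_sub _ _).trans (add_le_add (hDG i) (abs_mulVec_apply_le hDH θ i))
  have hl2 : √((θhat - θ) ⬝ᵥ (θhat - θ)) ≤ √d * M / (Λ - d * DH) := by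
    simpa only [Fintype.card_fin] using
      hHhat.sqrt_dotProduct_self_le hgap (mulVec_sub_of_mulVec_eq hHθ hHθhat ▸ hres)
  have hsq : ∑ i, (θhat i - θ i) ^ 2 = (θhat - θ) ⬝ᵥ (θhat - θ) := by
    simp only [dotProduct, sq, Pi.sub_apply]
  refine ⟨hsq ▸ hl2, ?_⟩
  calc ∑ i, |θhat i - θ i| ≤ √d * √((θhat - θ) ⬝ᵥ (θhat - θ)) := by
        simpa only [Fintype.card_fin, Pi.sub_apply]
          using sum_abs_le_sqrt_card_mul_sqrt_dotProduct_self (θhat - θ)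
    _ ≤ √d * (√d * M / (Λ - d * DH)) := by gcongr
    _ = d * M / (Λ - d * DH) := by
        rw [← mul_div_assoc, ← mul_assoc, Real.mul_self_sqrt (Nat.cast_nonneg d)]

/-- Deterministic estimation bound for post-selection least squares:
if `λ_min(H) ≥ Λ`, `‖Ĥ − H‖_∞ ≤ D^H` entrywise with `Λ − d·D^H > 0`, and
`‖Ĝ − G‖_∞ ≤ D^G`, then with `θ̂ = Ĥ⁻¹Ĝ` and `θ = H⁻¹G`,
`‖θ̂ − θ‖₂ ≤ √d (D^G + D^H ‖θ‖₁)/(Λ − d D^H)` and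
`‖θ̂ − θ‖₁ ≤ d (D^G + D^H ‖θ‖₁)/(Λ − d D^H)`. -/
theorem post_selection_ls_deterministic_bound {d : ℕ}
    (H Hhat : Matrix (Fin d) (Fin d) ℝ) (G Ghat : Fin d → ℝ)
    (Λ DH DG : ℝ) (hΛpos : 0 < Λ)
    (hH : H.PosDef) (hHhat : Hhat.IsSymm)
    (hmin : ∀ x : Fin d → ℝ, Λ * (x ⬝ᵥ x) ≤ x ⬝ᵥ H.mulVec x)
    (hDH : ∀ i j, |Hhat i j - H i j| ≤ DH)
    (hgap : 0 < Λ - d * DH)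
    (hDG : ∀ i, |Ghat i - G i| ≤ DG)
    (θhat θ : Fin d → ℝ)
    (hθhat : θhat = Hhat⁻¹.mulVec Ghat) (hθ : θ = H⁻¹.mulVec G) :
    Real.sqrt (∑ i, (θhat i - θ i) ^ 2) ≤
        Real.sqrt d * (DG + DH * ∑ i, |θ i|) / (Λ - d * DH) ∧
      (∑ i, |θhat i - θ i|) ≤ d * (DG + DH * ∑ i, |θ i|) / (Λ - d * DH) :=
  post_selection_ls_deterministic_bound_general H Hhat G Ghat Λ DH DG hΛpos hmin hDH hgap hDG θhat θ
    hθhat hθ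
end
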